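/- arXiv:1910.08299 — 6 statements merged into one kernel-verified Lean document; each statement's English description precedes it below -/
import Mathlib

section
/- Any two L-projections on a Banach space commute. -/
def IsLProj {X : Type*} [NormedAddCommGroup X] [NormedSpace ℝ X]
    (π : X →L[ℝ] X) : Prop :=
  π.comp π = π ∧ ∀ x, ‖x‖ = ‖π x‖ + ‖x - π x‖

/-- Any two L-projections on a Banach space commute. -/
theorem lproj_commute {X : Type*} [NormedAddCommGroup X] [NormedSpace ℝ X]
    [CompleteSpace X] (π ρ : X →L[ℝ] X) (hπ : IsLProj π) (hρ : IsLProj ρ) :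
    π.comp ρ = ρ.comp π := by
  have key : ∀ σ : X →L[ℝ] X, IsLProj σ → IsLprojection X σ := by
    intro σ hσ
    refine ⟨hσ.1, fun x => ?_⟩
    have : (1 - σ) • x = x - σ x := by
      simp [sub_smul, ContinuousLinearMap.smul_def]
    rw [this]
    exact hσ.2 x
  have h := IsLprojection.commute (key π hπ) (key ρ hρ)
  exact h
end

section
/- If π is an M-projection on a Banach space X, then its adjoint π' on the dual space X' is an L-projection. -/
def IsMProj {X : Type*} [NormedAddCommGroup X] [NormedSpace ℝ X]
    (π : X →L[ℝ] X) : Prop :=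
  π.comp π = π ∧ ∀ x, ‖x‖ = max ‖π x‖ ‖x - π x‖

/-- The adjoint (dual map) of `π`, sending `f ∈ X'` to `f ∘ π`. -/
noncomputable def adjointMap {X : Type*} [NormedAddCommGroup X] [NormedSpace ℝ X]
    (π : X →L[ℝ] X) : StrongDual ℝ X →L[ℝ] StrongDual ℝ X :=
  (ContinuousLinearMap.compL ℝ X X ℝ).flip π

section

variable {X : Type*} [NormedAddCommGroup X] [NormedSpace ℝ X]

theorem StrongDual.exists_lt_apply_of_lt_norm (f : StrongDual ℝ X) {r : ℝ} (hr : r < ‖f‖) :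
    ∃ x : X, ‖x‖ < 1 ∧ r < f x := by
  obtain ⟨x, hx, hrx⟩ := ContinuousLinearMap.exists_lt_apply_of_lt_opNorm f hr
  rcases le_total 0 (f x) with hfx | hfx
  · exact ⟨x, hx, by rwa [Real.norm_of_nonneg hfx] at hrx⟩
  · exact ⟨-x, by rwa [norm_neg], by rwa [map_neg, ← Real.norm_of_nonpos hfx]⟩

theorem adjointMap_apply (π : X →L[ℝ] X) (f : StrongDual ℝ X) :
    adjointMap π f = f.comp π :=
  rfl

theorem adjointMap_idem {π : X →L[ℝ] X} (hπ : π.comp π = π) :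
    (adjointMap π).comp (adjointMap π) = adjointMap π := by
  ext f x
  exact congrArg f (DFunLike.congr_fun hπ x)

namespace IsMProj

variable {π : X →L[ℝ] X}

theorem apply_apply (hπ : IsMProj π) (x : X) : π (π x) = π x :=
  DFunLike.congr_fun hπ.1 x

theorem norm_apply_le (hπ : IsMProj π) (x : X) : ‖π x‖ ≤ ‖x‖ :=
  (hπ.2 x).ge.trans' (le_max_left _ _)

theorem norm_sub_apply_le (hπ : IsMProj π) (x : X) : ‖x - π x‖ ≤ ‖x‖ :=
  (hπ.2 x).ge.trans' (le_max_right _ _)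

theorem norm_apply_add_sub_apply_le (hπ : IsMProj π) (a b : X) :
    ‖π a + (b - π b)‖ ≤ max ‖a‖ ‖b‖ := by
  have hproj : π (π a + (b - π b)) = π a := by
    simp only [map_add, map_sub, hπ.apply_apply, sub_self, add_zero]
  rw [hπ.2, hproj, add_sub_cancel_left]
  exact max_le_max (hπ.norm_apply_le a) (hπ.norm_sub_apply_le b)

theorem norm_adjointMap_add_norm_sub_le (hπ : IsMProj π) (f : StrongDual ℝ X) :
    ‖adjointMap π f‖ + ‖f - adjointMap π f‖ ≤ ‖f‖ := by
  refine add_le_of_forall_lt fun r hr s hs => ?_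
  obtain ⟨a, ha, hra⟩ := (adjointMap π f).exists_lt_apply_of_lt_norm hr
  obtain ⟨b, hb, hsb⟩ := (f - adjointMap π f).exists_lt_apply_of_lt_norm hs
  have hz : ‖π a + (b - π b)‖ ≤ 1 :=
    (hπ.norm_apply_add_sub_apply_le a b).trans (max_le ha.le hb.le)
  calc r + s ≤ f (π a + (b - π b)) := by
        simp only [sub_apply, adjointMap_apply,
          ContinuousLinearMap.comp_apply] at hra hsb
        rw [map_add, map_sub]
        linarith
    _ ≤ ‖f‖ * ‖π a + (b - π b)‖ := (le_abs_self _).trans (f.le_opNorm _)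
    _ ≤ ‖f‖ := mul_le_of_le_one_right (norm_nonneg f) hz

theorem adjointMap_isLProj (hπ : IsMProj π) : IsLProj (adjointMap π) :=
  ⟨adjointMap_idem hπ.1, fun f =>
    (norm_le_norm_add_norm_sub' f _).antisymm (hπ.norm_adjointMap_add_norm_sub_le f)⟩

end IsMProj

end

theorem adjoint_of_mproj_is_lproj_general {X : Type*} [NormedAddCommGroup X]
    [NormedSpace ℝ X] (π : X →L[ℝ] X) (hπ : IsMProj π) :
    (∀ f : StrongDual ℝ X, adjointMap π f = f.comp π) ∧
      IsLProj (adjointMap π) :=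
  ⟨adjointMap_apply π, hπ.adjointMap_isLProj⟩

/-- The adjoint of an M-projection is an L-projection on the dual space. -/
theorem adjoint_of_mproj_is_lproj {X : Type*} [NormedAddCommGroup X]
    [NormedSpace ℝ X] [CompleteSpace X] (π : X →L[ℝ] X) (hπ : IsMProj π) :
    (∀ f : StrongDual ℝ X, adjointMap π f = f.comp π) ∧
      IsLProj (adjointMap π) :=
  adjoint_of_mproj_is_lproj_general π hπ
end

section
/- The set of L-projections on a Banach space X forms a Boolean algebra with operations π ∧ ρ = π∘ρ, π ∨ ρ = π + ρ − π∘ρ, and complement π* = I − π, with 0 as bottom and the identity as top. -/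
/-- The type of L-projections on `X`. -/
def LProj (X : Type*) [NormedAddCommGroup X] [NormedSpace ℝ X] : Type _ :=
  {π : X →L[ℝ] X // IsLProj π}

/-- A Boolean algebra structure on the L-projections realizes the operations
`π ⊓ ρ = π∘ρ`, `π ⊔ ρ = π + ρ - π∘ρ`, `πᶜ = I - π`, `⊥ = 0`, `⊤ = I`. -/
def IsCunninghamBA (X : Type*) [NormedAddCommGroup X] [NormedSpace ℝ X]
    [inst : BooleanAlgebra (LProj X)] : Prop :=
  (∀ p q : LProj X, (p ⊓ q).1 = p.1.comp q.1) ∧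
  (∀ p q : LProj X, (p ⊔ q).1 = p.1 + q.1 - p.1.comp q.1) ∧
  (∀ p : LProj X, (pᶜ).1 = ContinuousLinearMap.id ℝ X - p.1) ∧
  (⊥ : LProj X).1 = 0 ∧
  (⊤ : LProj X).1 = ContinuousLinearMap.id ℝ X

/-! Mathlib already carries Cunningham's Boolean algebra on the L-projections of any ring acting
faithfully on a normed group (`IsLprojection.Subtype.BooleanAlgebra`), with `P * Q`,
`P + Q - P * Q`, `1 - P`, `0` and `1` as operations. `IsLProj` is `IsLprojection` for the ring
`X →L[ℝ] X` up to unfolding `P • x` and `(1 - P) • x`, so transferring that structure along the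
resulting equivalence yields operations that agree with the required ones definitionally. -/

section

variable {X : Type*} [NormedAddCommGroup X] [NormedSpace ℝ X]

theorem isLProj_iff_isLprojection (π : X →L[ℝ] X) : IsLProj π ↔ IsLprojection X π :=
  ⟨fun h => ⟨h.1, h.2⟩, fun h => ⟨h.1, h.2⟩⟩

def LProj.equivSubtypeIsLprojection : LProj X ≃ {P : X →L[ℝ] X // IsLprojection X P} :=
  Equiv.subtypeEquivRight isLProj_iff_isLprojection

end

theorem lproj_booleanAlgebra_general (X : Type*) [NormedAddCommGroup X]
    [NormedSpace ℝ X] :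
    ∃ inst : BooleanAlgebra (LProj X), IsCunninghamBA X (inst := inst) :=
  ⟨LProj.equivSubtypeIsLprojection.booleanAlgebra,
    fun _ _ => rfl, fun _ _ => rfl, fun _ => rfl, rfl, rfl⟩

/-- The set of L-projections on a Banach space forms a Boolean algebra with
`π ⊓ ρ = π∘ρ`, `π ⊔ ρ = π + ρ - π∘ρ`, complement `I - π`, bottom `0`, top `I`. -/
theorem lproj_booleanAlgebra (X : Type*) [NormedAddCommGroup X]
    [NormedSpace ℝ X] [CompleteSpace X] :
    ∃ inst : BooleanAlgebra (LProj X), IsCunninghamBA X (inst := inst) :=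
  lproj_booleanAlgebra_general X
end

section
/- Let X be a Banach space, a ∈ X, and (x_ξ)_{ξ∈Ξ} a family in X with ‖πx_ξ‖ ≤ ‖πa‖ for all ξ and every L-projection π. Then for every partition of unity (π_ξ)_{ξ∈Ξ} of L-projections (pairwise disjoint with supremum the identity in the Boolean algebra of L-projections) there exists a unique x ∈ X with π_ξ x = π_ξ x_ξ for all ξ; moreover x = Σ_ξ π_ξ x_ξ (the net of finite partial sums converges in norm) and ‖πx‖ ≤ ‖πa‖ for every L-projection π. -/
open Filter Topology

namespace IsLProj

variable {X : Type*} [NormedAddCommGroup X] [NormedSpace ℝ X] {P Q : X →L[ℝ] X}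

lemma apply_apply (hP : IsLProj P) (x : X) : P (P x) = P x :=
  congrArg (fun f : X →L[ℝ] X => f x) hP.1

lemma norm_apply_le (hP : IsLProj P) (x : X) : ‖P x‖ ≤ ‖x‖ := by
  linarith [hP.2 x, norm_nonneg (x - P x)]

lemma opNorm_le_one (hP : IsLProj P) : ‖P‖ ≤ 1 :=
  P.opNorm_le_bound zero_le_one fun x => by simpa using hP.norm_apply_le x

lemma norm_add_eq {u v : X} (hP : IsLProj P) (hu : P u = u) (hv : P v = 0) :
    ‖u + v‖ = ‖u‖ + ‖v‖ := by
  simpa [hu, hv] using hP.2 (u + v)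

lemma zero : IsLProj (0 : X →L[ℝ] X) :=
  ⟨by simp, by simp⟩

lemma id_sub (hP : IsLProj P) : IsLProj (ContinuousLinearMap.id ℝ X - P) := by
  refine ⟨?_, fun u => ?_⟩
  · ext u
    simp [hP.apply_apply]
  · simpa [add_comm] using hP.2 u

/-- Cunningham's lemma: splitting `Q x` first by `P` and then both pieces by `Q` yields
`‖Q x‖ ≥ ‖Q x‖ + 2 ‖P Q x - Q P Q x‖`. -/
lemma apply_apply_apply (hP : IsLProj P) (hQ : IsLProj Q) (x : X) :
    Q (P (Q x)) = P (Q x) := by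
  set w := Q x
  set p := P w
  have hw : Q w = w := hQ.apply_apply x
  have hsplit : ‖w‖ = ‖Q p‖ + ‖w - Q p‖ + 2 * ‖p - Q p‖ := by
    have h := hQ.2 (w - p)
    rw [map_sub, hw, sub_sub_sub_cancel_left, norm_sub_rev (Q p)] at h
    linarith [hP.2 w, hQ.2 p]
  have hpQp : ‖p - Q p‖ = 0 := by
    linarith [norm_le_norm_add_norm_sub' w (Q p), norm_nonneg (p - Q p)]
  exact (sub_eq_zero.1 (norm_eq_zero.1 hpQp)).symm

lemma commute (hP : IsLProj P) (hQ : IsLProj Q) (x : X) : Q (P x) = P (Q x) := by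
  have h := hP.apply_apply_apply hQ.id_sub x
  simp only [sub_apply, ContinuousLinearMap.id_apply, map_sub,
    hP.apply_apply_apply hQ, sub_self, sub_zero, sub_right_inj] at h
  exact h

lemma comp (hP : IsLProj P) (hQ : IsLProj Q) : IsLProj (P.comp Q) := by
  refine ⟨?_, fun u => ?_⟩
  · ext u
    simp [hP.apply_apply_apply hQ, hP.apply_apply]
  · have h := hQ.2 (u - P (Q u))
    rw [map_sub, hP.apply_apply_apply hQ, sub_sub_sub_cancel_right] at h
    simp only [ContinuousLinearMap.comp_apply]
    linarith [hQ.2 u, hP.2 (Q u)]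

lemma add (hP : IsLProj P) (hQ : IsLProj Q) (hPQ : P.comp Q = 0) : IsLProj (P + Q) := by
  have hsum : P + Q = ContinuousLinearMap.id ℝ X -
      (ContinuousLinearMap.id ℝ X - P).comp (ContinuousLinearMap.id ℝ X - Q) := by
    simp only [ContinuousLinearMap.comp_sub, ContinuousLinearMap.comp_id,
      ContinuousLinearMap.sub_comp, ContinuousLinearMap.id_comp, hPQ, sub_zero]
    abel
  exact hsum ▸ (hP.id_sub.comp hQ.id_sub).id_sub

lemma of_tendsto {α : Type*} {l : Filter α} [l.NeBot] {ρ : α → X →L[ℝ] X}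
    (hρ : ∀ a, IsLProj (ρ a)) (hlim : ∀ u, Tendsto (fun a => ρ a u) l (𝓝 (P u)))
    (hP : P.comp P = P) : IsLProj P := by
  refine ⟨hP, fun u => ?_⟩
  have h := ((hlim u).norm).add (((tendsto_const_nhds (x := u)).sub (hlim u)).norm)
  simp only [← (hρ _).2 u] at h
  exact tendsto_nhds_unique tendsto_const_nhds h

end IsLProj

structure IsDisjointLProjFamily {X : Type*} [NormedAddCommGroup X] [NormedSpace ℝ X] {ι : Type*}
    (π : ι → X →L[ℝ] X) : Prop where
  isLProj : ∀ ξ, IsLProj (π ξ)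
  comp_eq_zero : ∀ ξ η, ξ ≠ η → (π ξ).comp (π η) = 0

namespace IsDisjointLProjFamily

variable {X : Type*} [NormedAddCommGroup X] [NormedSpace ℝ X] {ι : Type*}
  {π : ι → X →L[ℝ] X}

lemma apply_apply_of_ne (hπ : IsDisjointLProjFamily π) {ξ η : ι} (h : ξ ≠ η) (u : X) :
    π ξ (π η u) = 0 :=
  congrArg (fun f : X →L[ℝ] X => f u) (hπ.comp_eq_zero ξ η h)

lemma apply_sum_apply_of_notMem (hπ : IsDisjointLProjFamily π) {ξ : ι} {F : Finset ι}
    (hξ : ξ ∉ F) (u : X) : π ξ ((∑ η ∈ F, π η) u) = 0 := by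
  rw [sum_apply, map_sum]
  exact Finset.sum_eq_zero fun η hη => hπ.apply_apply_of_ne (ne_of_mem_of_not_mem hη hξ).symm u

lemma isLProj_sum (hπ : IsDisjointLProjFamily π) (F : Finset ι) : IsLProj (∑ ξ ∈ F, π ξ) := by
  classical
  induction F using Finset.induction_on with
  | empty => simpa using IsLProj.zero
  | insert ξ F hξ ih =>
    rw [Finset.sum_insert hξ]
    refine (hπ.isLProj ξ).add ih ?_
    ext u
    exact hπ.apply_sum_apply_of_notMem hξ u

lemma norm_sum_apply (hπ : IsDisjointLProjFamily π) (F : Finset ι) (u : X) :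
    ‖(∑ ξ ∈ F, π ξ) u‖ = ∑ ξ ∈ F, ‖π ξ u‖ := by
  classical
  induction F using Finset.induction_on with
  | empty => simp
  | insert ξ F hξ ih =>
    rw [Finset.sum_insert hξ, Finset.sum_insert hξ, ← ih, add_apply]
    exact (hπ.isLProj ξ).norm_add_eq ((hπ.isLProj ξ).apply_apply u)
      (hπ.apply_sum_apply_of_notMem hξ u)

lemma sum_norm_apply_le (hπ : IsDisjointLProjFamily π) (F : Finset ι) (u : X) :
    ∑ ξ ∈ F, ‖π ξ u‖ ≤ ‖u‖ :=
  hπ.norm_sum_apply F u ▸ (hπ.isLProj_sum F).norm_apply_le u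

lemma summable_norm_apply (hπ : IsDisjointLProjFamily π) (u : X) :
    Summable fun ξ => ‖π ξ u‖ :=
  summable_of_sum_le (fun _ => norm_nonneg _) (hπ.sum_norm_apply_le · u)

lemma tsum_norm_apply_le (hπ : IsDisjointLProjFamily π) (u : X) : ∑' ξ, ‖π ξ u‖ ≤ ‖u‖ :=
  (hπ.summable_norm_apply u).tsum_le_of_sum_le (hπ.sum_norm_apply_le · u)

lemma hasSum_apply_apply (hπ : IsDisjointLProjFamily π) (ξ : ι) (u : X) :
    HasSum (fun η => π η (π ξ u)) (π ξ u) := by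
  convert hasSum_single ξ fun η hη => hπ.apply_apply_of_ne hη u using 1
  exact ((hπ.isLProj ξ).apply_apply u).symm

lemma apply_eq_of_hasSum (hπ : IsDisjointLProjFamily π) {v : ι → X} {s : X}
    (hs : HasSum (fun η => π η (v η)) s) (ξ : ι) : π ξ s = π ξ (v ξ) := by
  refine (hs.mapL (π ξ)).unique ?_
  convert hasSum_single ξ fun η hη => hπ.apply_apply_of_ne (Ne.symm hη) (v η) using 1
  exact ((hπ.isLProj ξ).apply_apply (v ξ)).symm

lemma norm_le_of_hasSum (hπ : IsDisjointLProjFamily π) {v : ι → X} {s a : X}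
    (hs : HasSum (fun ξ => π ξ (v ξ)) s) (hv : ∀ ξ, ‖π ξ (v ξ)‖ ≤ ‖π ξ a‖) : ‖s‖ ≤ ‖a‖ :=
  (hs.norm_le_of_bounded (hπ.summable_norm_apply a).hasSum hv).trans (hπ.tsum_norm_apply_le a)

variable [CompleteSpace X]

lemma exists_isLProj_hasSum_apply (hπ : IsDisjointLProjFamily π) :
    ∃ P : X →L[ℝ] X, IsLProj P ∧ ∀ u, HasSum (fun ξ => π ξ u) (P u) := by
  have hsum (u : X) : HasSum (fun ξ => π ξ u) (∑' ξ, π ξ u) :=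
    (Summable.of_norm (hπ.summable_norm_apply u)).hasSum
  have hbdd : Bornology.IsBounded (Set.range fun F : Finset ι => ∑ ξ ∈ F, π ξ) :=
    isBounded_iff_forall_norm_le.2
      ⟨1, Set.forall_mem_range.2 fun F => (hπ.isLProj_sum F).opNorm_le_one⟩
  let P := ContinuousLinearMap.ofTendstoOfBoundedRange _ _
    (tendsto_pi_nhds.2 fun u => by simp only [sum_apply]; exact hsum u) hbdd
  have hP (u : X) : HasSum (fun ξ => π ξ u) (P u) := hsum u
  refine ⟨P, IsLProj.of_tendsto (l := atTop) hπ.isLProj_sum (fun u => ?_) ?_, hP⟩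
  · simp only [sum_apply]
    exact hP u
  · ext u
    refine (hP (P u)).unique ?_
    simpa only [hπ.apply_eq_of_hasSum (v := fun _ => u) (hP u)] using hP u

lemma hasSum_apply_self (hπ : IsDisjointLProjFamily π)
    (hsup : ∀ ρ : X →L[ℝ] X, IsLProj ρ → (∀ ξ, ρ.comp (π ξ) = π ξ) →
      ρ = ContinuousLinearMap.id ℝ X) (u : X) :
    HasSum (fun ξ => π ξ u) u := by
  obtain ⟨P, hPL, hP⟩ := hπ.exists_isLProj_hasSum_apply
  have hPid : P = ContinuousLinearMap.id ℝ X :=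
    hsup P hPL fun ξ => ContinuousLinearMap.ext fun w =>
      (hP (π ξ w)).unique (hπ.hasSum_apply_apply ξ w)
  simpa only [hPid, ContinuousLinearMap.id_apply] using hP u

end IsDisjointLProjFamily

/-- Mixing lemma: given a family dominated by `a` (w.r.t. all L-projections) and a
partition of unity `(π_ξ)` of pairwise disjoint L-projections whose only upper bound
among L-projections is the identity, there is a unique `x` with `π_ξ x = π_ξ x_ξ`;
moreover `x = Σ_ξ π_ξ x_ξ` and `‖πx‖ ≤ ‖πa‖` for every L-projection `π`. -/
theorem lproj_mixing {X : Type*} [NormedAddCommGroup X] [NormedSpace ℝ X]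
    [CompleteSpace X] {ι : Type*} (a : X) (x : ι → X) (π : ι → (X →L[ℝ] X))
    (hx : ∀ ξ, ∀ ρ : X →L[ℝ] X, IsLProj ρ → ‖ρ (x ξ)‖ ≤ ‖ρ a‖)
    (hL : ∀ ξ, IsLProj (π ξ))
    (hdisj : ∀ ξ η, ξ ≠ η → (π ξ).comp (π η) = 0)
    (hsup : ∀ ρ : X →L[ℝ] X, IsLProj ρ → (∀ ξ, ρ.comp (π ξ) = π ξ) →
      ρ = ContinuousLinearMap.id ℝ X) :
    ∃ y : X, (∀ ξ, π ξ y = π ξ (x ξ)) ∧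
      HasSum (fun ξ => π ξ (x ξ)) y ∧
      (∀ ρ : X →L[ℝ] X, IsLProj ρ → ‖ρ y‖ ≤ ‖ρ a‖) ∧
      ∀ z : X, (∀ ξ, π ξ z = π ξ (x ξ)) → z = y := by
  have hπ : IsDisjointLProjFamily π := ⟨hL, hdisj⟩
  have hy : HasSum (fun ξ => π ξ (x ξ)) (∑' ξ, π ξ (x ξ)) :=
    ((hπ.summable_norm_apply a).of_norm_bounded fun ξ => hx ξ _ (hL ξ)).hasSum
  refine ⟨_, hπ.apply_eq_of_hasSum hy, hy, fun ρ hρ => ?_, fun z hz => ?_⟩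
  · -- `ρ y` is the mixture of the `ρ (x ξ)`, since `ρ` commutes with every `π ξ`.
    refine hπ.norm_le_of_hasSum (v := fun ξ => ρ (x ξ)) ?_ fun ξ => hx ξ _ ((hL ξ).comp hρ)
    simpa only [hρ.commute (hL _)] using hy.mapL ρ
  · have hz' : HasSum (fun ξ => π ξ (x ξ)) z := by
      simpa only [hz] using hπ.hasSum_apply_self hsup z
    exact hz'.unique hy
end

section
/- Let E be a Banach lattice and X a lattice normed space over E with E-valued norm ⟦·⟧, endowed with the mixed norm ‖x‖ := ‖⟦x⟧‖_E. Then (X, ‖·‖) is a Banach space if and only if X is E-uniformly complete. -/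
/-!
Solidity of the norm of `E` turns `ν x ≤ ε • e` into `‖x‖ ≤ ε ‖e‖`, so `E`-uniformly Cauchy
(convergent) sequences are Cauchy (convergent) for the mixed norm. If such a Cauchy sequence has a
norm limit `x`, letting `m → ∞` in `ν (u m - u n) ≤ ε • e` (the positive cone of `E` is closed)
shows that it converges `E`-uniformly to `x` with the same regulator `e`.

Conversely, completeness only has to be checked on sequences with `‖v (k+1) - v k‖ ≤ 4⁻ᵏ`. For
these `e := ∑ 2ᵏ • ν (v (k+1) - v k)` converges in the Banach space `E`, and the tail
`∑_{j ≥ n} ν (v (j+1) - v j)` is at most `2⁻ⁿ • e`, so `v` is `E`-uniformly Cauchy with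
regulator `e`.
-/

/-- `(u_n)` is `E`-uniformly Cauchy w.r.t. the `E`-valued norm `ν`. -/
def EUnifCauchy {X E : Type*} [AddCommGroup X] [NormedAddCommGroup E] [Lattice E] [HasSolidNorm E]
    [IsOrderedAddMonoid E]
    [Module ℝ E] (ν : X → E) (u : ℕ → X) : Prop :=
  ∃ e : E, 0 ≤ e ∧ ∀ ε : ℝ, 0 < ε → ∃ N : ℕ, ∀ m ≥ N, ∀ n ≥ N,
    ν (u m - u n) ≤ ε • e

/-- `(u_n)` is `E`-uniformly convergent to `x` w.r.t. the `E`-valued norm `ν`. -/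
def EUnifConv {X E : Type*} [AddCommGroup X] [NormedAddCommGroup E] [Lattice E] [HasSolidNorm E]
    [IsOrderedAddMonoid E]
    [Module ℝ E] (ν : X → E) (u : ℕ → X) (x : X) : Prop :=
  ∃ e : E, 0 ≤ e ∧ ∀ ε : ℝ, 0 < ε → ∃ N : ℕ, ∀ n ≥ N, ν (x - u n) ≤ ε • e

open Filter Topology Finset

structure IsLatticeSeminorm {X E : Type*} [AddCommGroup X] [Module ℝ X] [AddCommGroup E]
    [PartialOrder E] [Module ℝ E] (ν : X → E) : Prop where
  nonneg : ∀ x, 0 ≤ ν x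
  map_smul : ∀ (r : ℝ) (x : X), ν (r • x) = |r| • ν x
  add_le : ∀ x y, ν (x + y) ≤ ν x + ν y

namespace IsLatticeSeminorm

section

variable {X E : Type*} [AddCommGroup X] [Module ℝ X] [AddCommGroup E] [PartialOrder E]
  [Module ℝ E] {ν : X → E}

theorem map_zero (hν : IsLatticeSeminorm ν) : ν 0 = 0 := by
  simpa using hν.map_smul 0 0

theorem map_neg (hν : IsLatticeSeminorm ν) (x : X) : ν (-x) = ν x := by
  simpa using hν.map_smul (-1) x

theorem map_sub_rev (hν : IsLatticeSeminorm ν) (x y : X) : ν (x - y) = ν (y - x) := by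
  rw [← neg_sub, hν.map_neg]

theorem smul_nonneg (hν : IsLatticeSeminorm ν) {c : ℝ} (hc : 0 ≤ c) (x : X) : 0 ≤ c • ν x := by
  simpa [hν.map_smul, abs_of_nonneg hc] using hν.nonneg (c • x)

theorem le_smul [IsOrderedAddMonoid E] (hν : IsLatticeSeminorm ν) {c : ℝ} (hc : 1 ≤ c) (x : X) :
    ν x ≤ c • ν x := by
  have h := hν.smul_nonneg (sub_nonneg.2 hc) x
  rwa [sub_smul, one_smul, sub_nonneg] at h

theorem sub_le_sum_Ico [IsOrderedAddMonoid E] (hν : IsLatticeSeminorm ν) (v : ℕ → X) {n m : ℕ}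
    (h : n ≤ m) :
    ν (v m - v n) ≤ ∑ j ∈ Ico n m, ν (v (j + 1) - v j) := by
  rw [← sum_Ico_sub v h]
  exact le_sum_of_subadditive ν hν.map_zero.le hν.add_le _ _

theorem sum_Ico_le_smul_tsum [IsOrderedAddMonoid E] [TopologicalSpace E] [OrderClosedTopology E]
    [ContinuousConstSMul ℝ E] (hν : IsLatticeSeminorm ν) (d : ℕ → X) {w : ℕ → ℝ}
    (hw : Monotone w) (hw0 : ∀ k, 0 ≤ w k) (hs : Summable fun k => w k • ν (d k)) {ε : ℝ}
    (hε : 0 ≤ ε) {n : ℕ} (hn : 1 ≤ ε * w n) (m : ℕ) :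
    ∑ j ∈ Ico n m, ν (d j) ≤ ε • ∑' k, w k • ν (d k) := by
  have hs' : Summable fun k => (ε * w k) • ν (d k) := by
    simpa only [smul_smul] using hs.const_smul ε
  calc ∑ j ∈ Ico n m, ν (d j) ≤ ∑ j ∈ Ico n m, (ε * w j) • ν (d j) :=
        sum_le_sum fun j hj => hν.le_smul
          (hn.trans (mul_le_mul_of_nonneg_left (hw (mem_Ico.1 hj).1) hε)) _
    _ ≤ ∑' k, (ε * w k) • ν (d k) :=
        hs'.sum_le_tsum _ fun k _ => hν.smul_nonneg (mul_nonneg hε (hw0 k)) _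
    _ = ε • ∑' k, w k • ν (d k) := by
        simp only [← smul_smul, hs.tsum_const_smul ε]

end

variable {X E : Type*} [NormedAddCommGroup X] [Module ℝ X] [NormedAddCommGroup E] [Lattice E]
  [HasSolidNorm E] [IsOrderedAddMonoid E] [NormedSpace ℝ E] {ν : X → E}

theorem norm_le_of_le_smul (hν : IsLatticeSeminorm ν) (hmix : ∀ x, ‖x‖ = ‖ν x‖) {x : X}
    {ε : ℝ} (hε : 0 ≤ ε) {e : E} (h : ν x ≤ ε • e) : ‖x‖ ≤ ε * ‖e‖ := by
  rw [hmix, ← Real.norm_of_nonneg hε, ← norm_smul]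
  refine norm_le_norm_of_abs_le_abs ?_
  rw [abs_of_nonneg (hν.nonneg x)]
  exact h.trans (le_abs_self _)

theorem cauchySeq_of_eUnifCauchy (hν : IsLatticeSeminorm ν) (hmix : ∀ x, ‖x‖ = ‖ν x‖)
    {u : ℕ → X} (hu : EUnifCauchy ν u) : CauchySeq u := by
  obtain ⟨e, -, hu⟩ := hu
  refine Metric.cauchySeq_iff'.2 fun δ hδ => ?_
  obtain ⟨ε, hε, hεδ⟩ := exists_pos_mul_lt hδ ‖e‖
  obtain ⟨N, hN⟩ := hu ε hε
  refine ⟨N, fun n hn => ?_⟩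
  rw [dist_eq_norm]
  calc ‖u n - u N‖ ≤ ε * ‖e‖ := hν.norm_le_of_le_smul hmix hε.le (hN n hn N le_rfl)
    _ < δ := by rwa [mul_comm]

theorem tendsto_of_eUnifConv (hν : IsLatticeSeminorm ν) (hmix : ∀ x, ‖x‖ = ‖ν x‖)
    {u : ℕ → X} {x : X} (hu : EUnifConv ν u x) : Tendsto u atTop (𝓝 x) := by
  obtain ⟨e, -, hu⟩ := hu
  refine Metric.tendsto_atTop.2 fun δ hδ => ?_
  obtain ⟨ε, hε, hεδ⟩ := exists_pos_mul_lt hδ ‖e‖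
  obtain ⟨N, hN⟩ := hu ε hε
  refine ⟨N, fun n hn => ?_⟩
  rw [dist_comm, dist_eq_norm]
  calc ‖x - u n‖ ≤ ε * ‖e‖ := hν.norm_le_of_le_smul hmix hε.le (hN n hn)
    _ < δ := by rwa [mul_comm]

theorem eUnifConv_of_tendsto (hν : IsLatticeSeminorm ν) (hmix : ∀ x, ‖x‖ = ‖ν x‖)
    {u : ℕ → X} {x : X} (hu : EUnifCauchy ν u) (hx : Tendsto u atTop (𝓝 x)) :
    EUnifConv ν u x := by
  obtain ⟨e, he, hu⟩ := hu
  have hν_lim : Tendsto (fun m => ν (x - u m)) atTop (𝓝 0) := by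
    rw [tendsto_zero_iff_norm_tendsto_zero]
    simpa only [← hmix, norm_sub_rev x] using tendsto_iff_norm_sub_tendsto_zero.1 hx
  refine ⟨e, he, fun ε hε => ?_⟩
  obtain ⟨N, hN⟩ := hu ε hε
  refine ⟨N, fun n hn => ?_⟩
  have hbound : ∀ᶠ m in atTop, ν (x - u n) ≤ ν (x - u m) + ε • e :=
    eventually_atTop.2 ⟨N, fun m hm => calc
      ν (x - u n) = ν ((x - u m) + (u m - u n)) := by rw [sub_add_sub_cancel]
      _ ≤ ν (x - u m) + ν (u m - u n) := hν.add_le _ _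
      _ ≤ ν (x - u m) + ε • e := add_le_add_right (hN m hm n hn) _⟩
  simpa using ge_of_tendsto (hν_lim.add_const (ε • e)) hbound

theorem exists_eUnifConv [CompleteSpace X] (hν : IsLatticeSeminorm ν)
    (hmix : ∀ x, ‖x‖ = ‖ν x‖) {u : ℕ → X} (hu : EUnifCauchy ν u) : ∃ x, EUnifConv ν u x :=
  let ⟨x, hx⟩ := cauchySeq_tendsto_of_complete (hν.cauchySeq_of_eUnifCauchy hmix hu)
  ⟨x, hν.eUnifConv_of_tendsto hmix hu hx⟩

theorem eUnifCauchy_of_summable [CompleteSpace E] (hν : IsLatticeSeminorm ν)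
    (hmix : ∀ x, ‖x‖ = ‖ν x‖) {v : ℕ → X} {w : ℕ → ℝ} (hw : Monotone w) (hw0 : ∀ k, 0 ≤ w k)
    (hw_top : Tendsto w atTop atTop) (hv : Summable fun k => w k * ‖v (k + 1) - v k‖) :
    EUnifCauchy ν v := by
  have hs : Summable fun k => w k • ν (v (k + 1) - v k) :=
    .of_norm (by simpa only [norm_smul, Real.norm_of_nonneg (hw0 _), ← hmix] using hv)
  refine ⟨∑' k, w k • ν (v (k + 1) - v k), tsum_nonneg fun k => hν.smul_nonneg (hw0 k) _,
    fun ε hε => ?_⟩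
  obtain ⟨N, hN⟩ := (hw_top.eventually_ge_atTop ε⁻¹).exists_forall_of_atTop
  have htail : ∀ n ≥ N, ∀ m ≥ n, ν (v m - v n) ≤ ε • ∑' k, w k • ν (v (k + 1) - v k) :=
    fun n hn m hm => (hν.sub_le_sum_Ico v hm).trans <|
      hν.sum_Ico_le_smul_tsum _ hw hw0 hs hε.le
        (by rw [← inv_le_iff_one_le_mul₀' hε]; exact hN n hn) m
  refine ⟨N, fun m hm n hn => ?_⟩
  rcases le_total n m with h | h
  · exact htail n hn m h
  · rw [hν.map_sub_rev]
    exact htail m hm n h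

theorem completeSpace [CompleteSpace E] (hν : IsLatticeSeminorm ν) (hmix : ∀ x, ‖x‖ = ‖ν x‖)
    (H : ∀ u : ℕ → X, EUnifCauchy ν u → ∃ x, EUnifConv ν u x) : CompleteSpace X := by
  refine Metric.complete_of_convergent_controlled_sequences (fun n => 4⁻¹ ^ n)
    (fun n => by positivity) fun v hv => ?_
  have hsum : Summable fun k => (2 : ℝ) ^ k * ‖v (k + 1) - v k‖ := by
    refine .of_nonneg_of_le (fun k => by positivity) (fun k => ?_)
      (summable_geometric_of_lt_one (r := 2⁻¹) (by norm_num) (by norm_num))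
    calc (2 : ℝ) ^ k * ‖v (k + 1) - v k‖ ≤ 2 ^ k * 4⁻¹ ^ k := by
          rw [← dist_eq_norm]
          gcongr
          exact (hv k (k + 1) k k.le_succ le_rfl).le
      _ = 2⁻¹ ^ k := by rw [← mul_pow]; norm_num
  obtain ⟨x, hx⟩ := H v <| hν.eUnifCauchy_of_summable hmix (pow_right_mono₀ one_le_two)
    (fun k => by positivity) (tendsto_pow_atTop_atTop_of_one_lt one_lt_two) hsum
  exact ⟨x, hν.tendsto_of_eUnifConv hmix hx⟩

end IsLatticeSeminorm

theorem mixed_norm_complete_iff_general {X E : Type*} [NormedAddCommGroup X] [Module ℝ X]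
    [NormedAddCommGroup E] [Lattice E] [HasSolidNorm E]
    [IsOrderedAddMonoid E] [NormedSpace ℝ E] [CompleteSpace E]
    (ν : X → E)
    (hpos : ∀ x, 0 ≤ ν x)
    (hsmul : ∀ (r : ℝ) (x : X), ν (r • x) = |r| • ν x)
    (htri : ∀ x y, ν (x + y) ≤ ν x + ν y)
    (hmix : ∀ x, ‖x‖ = ‖ν x‖) :
    CompleteSpace X ↔ ∀ u : ℕ → X, EUnifCauchy ν u → ∃ x, EUnifConv ν u x := by
  have hν : IsLatticeSeminorm ν := ⟨hpos, hsmul, htri⟩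
  exact ⟨fun _ _ => hν.exists_eUnifConv hmix, hν.completeSpace hmix⟩

/-- For a lattice normed space `X` over a Banach lattice `E` endowed with the
mixed norm `‖x‖ = ‖⟦x⟧‖_E`, `X` is a Banach space iff it is `E`-uniformly complete. -/
theorem mixed_norm_complete_iff {X E : Type*} [NormedAddCommGroup X] [Module ℝ X]
    [NormedAddCommGroup E] [Lattice E] [HasSolidNorm E]
    [IsOrderedAddMonoid E] [NormedSpace ℝ E] [CompleteSpace E]
    (ν : X → E)
    (hpos : ∀ x, 0 ≤ ν x)
    (h0 : ∀ x, ν x = 0 → x = 0)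
    (hsmul : ∀ (r : ℝ) (x : X), ν (r • x) = |r| • ν x)
    (htri : ∀ x y, ν (x + y) ≤ ν x + ν y)
    (hmix : ∀ x, ‖x‖ = ‖ν x‖) :
    CompleteSpace X ↔ ∀ u : ℕ → X, EUnifCauchy ν u → ∃ x, EUnifConv ν u x :=
  mixed_norm_complete_iff_general ν hpos hsmul htri hmix
end

section
/- Let φ be a strictly positive order continuous linear functional on a Dedekind complete Banach lattice L whose norm satisfies ‖u‖ = φ(|u|) (an AL-space norm). If x^# : X → L is a linear operator on a lattice normed space X over L with φ ∘ x^# = 0 and x^# is B-linear for the Boolean algebra B of band projections of L, then x^# = 0. -/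
def IsBandProj {E : Type*} [Lattice E] [AddCommGroup E] [Module ℝ E]
    (b : E →ₗ[ℝ] E) : Prop :=
  (∀ e, b (b e) = b e) ∧ ∀ e, 0 ≤ e → 0 ≤ b e ∧ b e ≤ e

/-!
If `b` is the band projection onto the positive part of `T x`, then `B`-linearity gives
`(T x)⁺ = b (T x) = T (Φ b x)`, so `φ (T x)⁺ = 0`, and strict positivity of `φ` forces
`(T x)⁺ = 0`. Applied to `x` and `-x` this gives `T x ≤ 0 ≤ T x`.
-/

theorem eq_zero_of_nonneg_of_strictlyPositive {L : Type*} [PartialOrder L] [Zero L] {φ : L → ℝ}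
    (hsp : ∀ u : L, 0 < u → 0 < φ u)
    {u : L} (hu : 0 ≤ u) (hφu : φ u = 0) : u = 0 := by
  by_contra hne
  exact (hsp u (lt_of_le_of_ne hu (Ne.symm hne))).ne' hφu

theorem apply_nonpos_of_bandLinear {L X : Type*} [AddCommGroup L] [Lattice L] [Module ℝ L]
    (φ : L → ℝ) (hsp : ∀ u : L, 0 < u → 0 < φ u)
    (hproj : ∀ u : L, ∃ b : L →ₗ[ℝ] L, IsBandProj b ∧ b u = u ⊔ 0)
    (Φ : (L →ₗ[ℝ] L) → X → X) (T : X → L) (h0 : ∀ x, φ (T x) = 0)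
    (hBlin : ∀ b : L →ₗ[ℝ] L, IsBandProj b → ∀ x, T (Φ b x) = b (T x)) (x : X) :
    T x ≤ 0 := by
  obtain ⟨b, hb, hbu⟩ := hproj (T x)
  have hφ : φ (T x ⊔ 0) = 0 := by rw [← hbu, ← hBlin b hb x, h0]
  exact sup_eq_right.mp (eq_zero_of_nonneg_of_strictlyPositive hsp le_sup_right hφ)

theorem blinear_functional_zero_general {L X : Type*}
    [NormedAddCommGroup L] [Lattice L] [IsOrderedAddMonoid L]
    [NormedSpace ℝ L]
    [AddCommGroup X] [Module ℝ X]
    (φ : L →ₗ[ℝ] ℝ)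
    (hsp : ∀ u : L, 0 < u → 0 < φ u)
    (hproj : ∀ u : L, ∃ b : L →ₗ[ℝ] L, IsBandProj b ∧ b u = u ⊔ 0)
    (Φ : (L →ₗ[ℝ] L) → (X →ₗ[ℝ] X))
    (T : X →ₗ[ℝ] L)
    (h0 : ∀ x, φ (T x) = 0)
    (hBlin : ∀ b : L →ₗ[ℝ] L, IsBandProj b → ∀ x, T (Φ b x) = b (T x)) :
    T = 0 := by
  have hnonpos := apply_nonpos_of_bandLinear φ hsp hproj (fun b => Φ b) T h0 hBlin
  ext x
  have hneg : T (-x) ≤ 0 := hnonpos (-x)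
  rw [map_neg, neg_nonpos] at hneg
  exact le_antisymm (hnonpos x) hneg

/-- If `φ` is a strictly positive order continuous functional on a Dedekind
complete Banach lattice `L` with `‖u‖ = φ(|u|)`, and `x^# : X → L` is `B`-linear
with `φ ∘ x^# = 0`, then `x^# = 0`. -/
theorem blinear_functional_zero {L X : Type*}
    [NormedAddCommGroup L] [Lattice L] [IsOrderedAddMonoid L] [HasSolidNorm L]
    [NormedSpace ℝ L] [CompleteSpace L]
    [AddCommGroup X] [Module ℝ X]
    (φ : L →ₗ[ℝ] ℝ)
    (hsp : ∀ u : L, 0 < u → 0 < φ u)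
    (hoc : ∀ (A : Set L) (a : L), A.Nonempty → DirectedOn (· ≥ ·) A →
      IsGLB A a → IsGLB (φ '' A) (φ a))
    (hnorm : ∀ u : L, ‖u‖ = φ |u|)
    (hproj : ∀ u : L, ∃ b : L →ₗ[ℝ] L, IsBandProj b ∧ b u = u ⊔ 0)
    (ν : X → L) (Φ : (L →ₗ[ℝ] L) → (X →ₗ[ℝ] X))
    (hcompat : ∀ b : L →ₗ[ℝ] L, IsBandProj b → ∀ x, ν (Φ b x) = b (ν x))
    (T : X →ₗ[ℝ] L)
    (h0 : ∀ x, φ (T x) = 0)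
    (hBlin : ∀ b : L →ₗ[ℝ] L, IsBandProj b → ∀ x, T (Φ b x) = b (T x)) :
    T = 0 :=
  blinear_functional_zero_general φ hsp hproj Φ T h0 hBlin
end
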